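/- (Convergence of NPA-I.) Let ℱ : ℝ^m → ℝ^m be a map and C₁ ≥ 0 a constant such that ‖(ℱ(U) − P_1·U) − (ℱ(V) − P_1·V)‖ ≤ C₁·ΔT²·‖U − V‖ for all U, V ∈ ℝ^m. Let N ≥ 1 be an integer, u⁰ ∈ ℝ^m, define the fine solution by U(T_0) = u⁰ and U(T_{n+1}) = ℱ(U(T_n)) for 0 ≤ n ≤ N−1, and let (U_n^k)_{0≤n≤N, k≥0} satisfy U_0^k = u⁰ for all k and U_{n+1}^{k+1} = P_1·U_n^{k+1} + ℱ(U_n^k) − P_1·U_n^k for 0 ≤ n ≤ N−1 and k ≥ 0. Set E_n^k = U(T_n) − U_n^k and β = ‖P_1‖ (so β < 1). Then for every k ≥ 0, max_{1≤j≤N} ‖E_j^{k+1}‖ ≤ (C₁·ΔT²)^{k+1} · min{ ((1 − β^{N−1})/(1 − β))^{k+1} , C(N−1, k+1) } · max_{1≤j≤N} ‖E_j^0‖, where C(·,·) denotes the binomial coefficient. -/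

import Mathlib

/-!
Write `A = I - ΔT D_h + ε²ΔT D_h²` and `B = I - ΔT D_h`, so that `P₁ = A⁻¹B` and
`A = B + ε²ΔT D_h²`. Since `-D_h = h⁻² LᵀL` for the injective difference matrix `L`, `D_h` is
negative definite, whence `⟨B y, D_h² y⟩ = ‖D_h y‖² - ΔT ⟨D_h y, D_h (D_h y)⟩ > 0` for `y ≠ 0` and
so `‖B y‖ < ‖A y‖`. Thus `P₁` shrinks every nonzero vector, and by compactness of the unit sphere
`β = ‖P₁‖ < 1`.

The errors `e_n^k = ‖E_n^k‖` satisfy `e_0^k = 0` and `e_{n+1}^{k+1} ≤ β e_n^{k+1} + C₁ΔT² e_n^k`.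
Induction on `n` gives `e_{n+1}^{k+1} ≤ C₁ΔT² (1 + β + ⋯ + β^{n-1}) max_j e_j^k`. Using `β ≤ 1`
instead, a double induction with Pascal's rule gives `e_{n+1}^k ≤ (C₁ΔT²)^k C(n, k) max_j e_j^0`.
-/

/-- The m×m discrete Dirichlet Laplacian with mesh size `h`. -/
noncomputable def Dh (m : ℕ) (h : ℝ) : Matrix (Fin m) (Fin m) ℝ :=
  Matrix.of fun i j =>
    if (i : ℕ) = (j : ℕ) then 1 / h ^ 2 * (-2)
    else if (i : ℕ) + 1 = (j : ℕ) ∨ (j : ℕ) + 1 = (i : ℕ) then 1 / h ^ 2 * 1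
    else 0

/-- `Pmat m h ΔT ε i = (I − iΔT·D_h + ε²ΔT·D_h²)⁻¹ (I − iΔT·D_h)`. -/
noncomputable def Pmat (m : ℕ) (h ΔT ε : ℝ) (i : ℕ) : Matrix (Fin m) (Fin m) ℝ :=
  ((1 : Matrix (Fin m) (Fin m) ℝ) - ((i : ℝ) * ΔT) • Dh m h
      + (ε ^ 2 * ΔT) • Dh m h ^ 2)⁻¹
    * ((1 : Matrix (Fin m) (Fin m) ℝ) - ((i : ℝ) * ΔT) • Dh m h)

/-- `PJmat m h ΔT ε J i = [(I − (iΔT/J)·D_h + ε²(ΔT/J)·D_h²)⁻¹ (I − (iΔT/J)·D_h)]^J`. -/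
noncomputable def PJmat (m : ℕ) (h ΔT ε : ℝ) (J i : ℕ) : Matrix (Fin m) (Fin m) ℝ :=
  (((1 : Matrix (Fin m) (Fin m) ℝ) - ((i : ℝ) * ΔT / (J : ℝ)) • Dh m h
      + (ε ^ 2 * (ΔT / (J : ℝ))) • Dh m h ^ 2)⁻¹
    * ((1 : Matrix (Fin m) (Fin m) ℝ) - ((i : ℝ) * ΔT / (J : ℝ)) • Dh m h)) ^ J

/-- The action of a matrix on `EuclideanSpace ℝ (Fin m)` (i.e. `ℝ^m` with the
Euclidean norm), given by matrix-vector multiplication. -/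
noncomputable def act {m : ℕ} (A : Matrix (Fin m) (Fin m) ℝ)
    (U : EuclideanSpace ℝ (Fin m)) : EuclideanSpace ℝ (Fin m) :=
  Matrix.toEuclideanCLM (𝕜 := ℝ) A U

/-- The operator (spectral) norm of a matrix, induced by the Euclidean norm. -/
noncomputable def opNorm {m : ℕ} (A : Matrix (Fin m) (Fin m) ℝ) : ℝ :=
  ‖Matrix.toEuclideanCLM (𝕜 := ℝ) A‖

open Finset
open scoped Matrix

theorem ContinuousLinearMap.opNorm_lt_one_of_norm_apply_lt {E F : Type*} [NormedAddCommGroup E]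
    [NormedSpace ℝ E] [ProperSpace E] [SeminormedAddCommGroup F] [NormedSpace ℝ F]
    (T : E →L[ℝ] F) (hT : ∀ x ≠ 0, ‖T x‖ < ‖x‖) : ‖T‖ < 1 := by
  rcases (Metric.sphere (0 : E) 1).eq_empty_or_nonempty with hempty | hne
  · refine (T.opNorm_le_of_unit_norm le_rfl fun x hx => ?_).trans_lt one_pos
    have : x ∈ Metric.sphere (0 : E) 1 := mem_sphere_zero_iff_norm.mpr hx
    simp [hempty] at this
  obtain ⟨x₀, hx₀, hmax⟩ :=
    (isCompact_sphere (0 : E) 1).exists_isMaxOn hne T.continuous.norm.continuousOn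
  rw [mem_sphere_zero_iff_norm] at hx₀
  calc ‖T‖ ≤ ‖T x₀‖ := T.opNorm_le_of_unit_norm (norm_nonneg _) fun x hx =>
        hmax (mem_sphere_zero_iff_norm.mpr hx)
    _ < 1 := hx₀ ▸ hT x₀ (by rintro rfl; simp at hx₀)

lemma EuclideanSpace.norm_toLp_sq {n : Type*} [Fintype n] (v : n → ℝ) :
    ‖WithLp.toLp 2 v‖ ^ 2 = v ⬝ᵥ v := by
  rw [← real_inner_self_eq_norm_sq, EuclideanSpace.inner_toLp_toLp, star_trivial]

lemma dotProduct_self_mulVec_lt_of_posDef_neg {n : Type*} [Fintype n] [DecidableEq n]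
    {D : Matrix n n ℝ} (hD : (-D).PosDef) {a b : ℝ} (ha : 0 ≤ a) (hb : 0 < b) {y : n → ℝ}
    (hy : y ≠ 0) :
    (1 - a • D) *ᵥ y ⬝ᵥ (1 - a • D) *ᵥ y <
      (1 - a • D + b • D ^ 2) *ᵥ y ⬝ᵥ (1 - a • D + b • D ^ 2) *ᵥ y := by
  set d := D *ᵥ y
  set u := (1 - a • D) *ᵥ y
  set w := b • D *ᵥ d
  have hsymm : Dᵀ = D := by simpa using hD.isHermitian.eq
  have hyd : y ⬝ᵥ D *ᵥ d = d ⬝ᵥ d := by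
    rw [Matrix.dotProduct_mulVec, ← Matrix.mulVec_transpose, hsymm, dotProduct_comm]
  have hdDd : d ⬝ᵥ D *ᵥ d ≤ 0 := by
    simpa [Matrix.neg_mulVec] using hD.posSemidef.dotProduct_mulVec_nonneg d
  have hd : d ≠ 0 := fun hd0 => by
    simpa [Matrix.neg_mulVec, d, hd0] using hD.dotProduct_mulVec_pos hy
  have hdd : 0 < d ⬝ᵥ d :=
    (Fintype.sum_nonneg fun i => mul_self_nonneg (d i)).lt_of_ne'
      (dotProduct_self_eq_zero.not.mpr hd)
  have hA : (1 - a • D + b • D ^ 2) *ᵥ y = u + w := by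
    simp only [u, w, d, Matrix.add_mulVec, Matrix.smul_mulVec, pow_two, Matrix.mulVec_mulVec]
  have huw : u ⬝ᵥ w = b * (d ⬝ᵥ d) - a * b * (d ⬝ᵥ D *ᵥ d) := by
    simp only [u, w, Matrix.sub_mulVec, Matrix.one_mulVec, Matrix.smul_mulVec, sub_dotProduct,
      smul_dotProduct, dotProduct_smul, hyd, smul_eq_mul]
    ring
  rw [hA, add_dotProduct, dotProduct_add, dotProduct_add, dotProduct_comm w u, huw]
  have hww : 0 ≤ w ⬝ᵥ w := Fintype.sum_nonneg fun i => mul_self_nonneg (w i)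
  nlinarith [mul_nonneg (mul_nonneg ha hb.le) (neg_nonneg.mpr hdDd)]

lemma opNorm_inv_mul_lt_one {m : ℕ} {D : Matrix (Fin m) (Fin m) ℝ} (hD : (-D).PosDef) {a b : ℝ}
    (ha : 0 ≤ a) (hb : 0 < b) : opNorm ((1 - a • D + b • D ^ 2)⁻¹ * (1 - a • D)) < 1 := by
  set A := 1 - a • D + b • D ^ 2
  set B := 1 - a • D
  have hAinj : Function.Injective A.mulVec := fun y z hyz => by
    by_contra hne
    have : B *ᵥ (y - z) ⬝ᵥ B *ᵥ (y - z) < A *ᵥ (y - z) ⬝ᵥ A *ᵥ (y - z) :=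
      dotProduct_self_mulVec_lt_of_posDef_neg hD ha hb (sub_ne_zero.mpr hne)
    rw [Matrix.mulVec_sub A, hyz, sub_self, dotProduct_zero] at this
    exact this.not_ge (Fintype.sum_nonneg fun i => mul_self_nonneg _)
  have hA : IsUnit A.det := (Matrix.isUnit_iff_isUnit_det A).mp
    (Matrix.mulVec_injective_iff_isUnit.mp hAinj)
  have hAB : A⁻¹ * B * A = B := by
    have hcomm : Commute B A := (Commute.refl B).add_right <|
      (Commute.one_left _).sub_left ((((Commute.refl D).pow_right 2).smul_left a).smul_right b)
    rw [Matrix.mul_assoc, hcomm.eq, Matrix.nonsing_inv_mul_cancel_left _ _ hA]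
  refine ContinuousLinearMap.opNorm_lt_one_of_norm_apply_lt _ fun x hx => ?_
  set y := A⁻¹ *ᵥ WithLp.ofLp x
  have hxy : x = WithLp.toLp 2 (A *ᵥ y) := by
    rw [Matrix.mulVec_mulVec, Matrix.mul_nonsing_inv _ hA, Matrix.one_mulVec, WithLp.toLp_ofLp]
  have hy : y ≠ 0 := by
    rintro hy0
    simp [hxy, hy0] at hx
  rw [hxy, Matrix.toEuclideanCLM_toLp, Matrix.mulVec_mulVec, hAB,
    ← sq_lt_sq₀ (norm_nonneg _) (norm_nonneg _), EuclideanSpace.norm_toLp_sq,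
    EuclideanSpace.norm_toLp_sq]
  exact dotProduct_self_mulVec_lt_of_posDef_neg hD ha hb hy

def diffMat (m : ℕ) : Matrix (Fin (m + 1)) (Fin m) ℝ :=
  Matrix.of fun i j => (if i = j.castSucc then 1 else 0) - (if i = j.succ then 1 else 0)

lemma transpose_diffMat_mul_diffMat (m : ℕ) {h : ℝ} (hh : h ≠ 0) :
    (diffMat m)ᵀ * diffMat m = -h ^ 2 • Dh m h := by
  ext j k
  simp only [Matrix.mul_apply, Matrix.transpose_apply, diffMat, Matrix.of_apply, sub_mul, ite_mul,
    one_mul, zero_mul, sum_sub_distrib, sum_ite_eq', mem_univ, if_true]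
  simp only [Matrix.smul_apply, Dh, Matrix.of_apply, smul_eq_mul, Fin.ext_iff, Fin.val_castSucc,
    Fin.val_succ]
  split_ifs <;> first | omega | (field_simp; norm_num)

lemma diffMat_mulVec_injective (m : ℕ) : Function.Injective (diffMat m).mulVec := by
  -- the first `m` rows of `diffMat m` form a unit lower triangular matrix
  set T := (diffMat m).submatrix Fin.castSucc id
  have hT : T.IsLowerTriangular := fun i j hij => by
    have : (i : ℕ) < j := hij
    simp only [T, diffMat, Matrix.submatrix_apply, Matrix.of_apply, id, Fin.ext_iff,
      Fin.val_castSucc, Fin.val_succ]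
    split_ifs <;> first | omega | norm_num
  have hdet : T.det = 1 := by
    rw [Matrix.det_of_isLowerTriangular T hT]
    refine prod_eq_one fun i _ => ?_
    simp [T, diffMat, Fin.ext_iff]
  have hTinj : Function.Injective T.mulVec :=
    Matrix.mulVec_injective_iff_isUnit.mpr <| (Matrix.isUnit_iff_isUnit_det T).mpr (by simp [hdet])
  intro x y hxy
  exact hTinj (funext fun i => congrFun hxy i.castSucc)

lemma neg_Dh_posDef (m : ℕ) {h : ℝ} (hh : h ≠ 0) : (-Dh m h).PosDef := by
  have hD : -Dh m h = (h ^ 2)⁻¹ • ((diffMat m)ᴴ * diffMat m) := by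
    rw [Matrix.conjTranspose_eq_transpose_of_trivial, transpose_diffMat_mul_diffMat m hh,
      smul_smul, mul_neg, inv_mul_cancel₀ (pow_ne_zero 2 hh), neg_one_smul]
  rw [hD]
  exact (Matrix.PosDef.conjTranspose_mul_self _ (diffMat_mulVec_injective m)).smul (by positivity)

lemma opNorm_Pmat_one_lt_one {m : ℕ} {h ΔT ε : ℝ} (hh : h ≠ 0) (hΔT : 0 < ΔT) (hε : ε ≠ 0) :
    opNorm (Pmat m h ΔT ε 1) < 1 :=
  opNorm_inv_mul_lt_one (neg_Dh_posDef m hh) (by positivity) (by positivity)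

lemma norm_sub_parareal_update_le {V : Type*} [NormedAddCommGroup V] [NormedSpace ℝ V]
    (T : V →L[ℝ] V) {F : V → V} {c : ℝ}
    (hF : ∀ u v, ‖(F u - T u) - (F v - T v)‖ ≤ c * ‖u - v‖) (u v w : V) :
    ‖F u - (T w + F v - T v)‖ ≤ ‖T‖ * ‖u - w‖ + c * ‖u - v‖ := by
  have : F u - (T w + F v - T v) = T (u - w) + ((F u - T u) - (F v - T v)) := by
    rw [map_sub]; abel
  rw [this]
  exact norm_add_le_of_le (T.le_opNorm _) (hF u v)

lemma sup'_Icc_one_le {N : ℕ} (hN : (Icc 1 N).Nonempty) {f : ℕ → ℝ} {c : ℝ}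
    (h : ∀ n < N, f (n + 1) ≤ c) : (Icc 1 N).sup' hN f ≤ c :=
  sup'_le _ _ fun j hj => by
    obtain ⟨hj1, hjN⟩ := mem_Icc.mp hj
    obtain ⟨n, rfl⟩ := Nat.exists_eq_add_of_le' hj1
    exact h n (by omega)

lemma le_sup'_Icc_one {N : ℕ} (hN : (Icc 1 N).Nonempty) (f : ℕ → ℝ) {n : ℕ} (hn : n < N) :
    f (n + 1) ≤ (Icc 1 N).sup' hN f :=
  le_sup' f (mem_Icc.mpr ⟨by omega, hn⟩)

lemma sup'_Icc_one_nonneg {N : ℕ} (hN : (Icc 1 N).Nonempty) {f : ℕ → ℝ} (hf : ∀ n, 0 ≤ f n) :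
    0 ≤ (Icc 1 N).sup' hN f :=
  (hf 1).trans (le_sup'_Icc_one hN f (nonempty_Icc.mp hN))

structure PararealErrorRecursion (e : ℕ → ℕ → ℝ) (β a : ℝ) (N : ℕ) : Prop where
  zero : ∀ k, e 0 k = 0
  step : ∀ n < N, ∀ k, e (n + 1) (k + 1) ≤ β * e n (k + 1) + a * e n k

namespace PararealErrorRecursion

variable {e : ℕ → ℕ → ℝ} {β a : ℝ} {N : ℕ} (hrec : PararealErrorRecursion e β a N)
include hrec

lemma le_mul_geom_sum (hβ : 0 ≤ β) (ha : 0 ≤ a) {k : ℕ} {M : ℝ}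
    (hM : ∀ n < N, e (n + 1) k ≤ M) :
    ∀ n < N, e (n + 1) (k + 1) ≤ a * (∑ t ∈ range n, β ^ t) * M := by
  intro n hn
  induction n with
  | zero => simpa [hrec.zero] using hrec.step 0 hn k
  | succ n ih =>
    calc e (n + 2) (k + 1) ≤ β * e (n + 1) (k + 1) + a * e (n + 1) k := hrec.step _ hn k
      _ ≤ β * (a * (∑ t ∈ range n, β ^ t) * M) + a * M := by
        gcongr
        exacts [ih (by omega), hM _ (by omega)]
      _ = a * (∑ t ∈ range (n + 1), β ^ t) * M := by rw [geom_sum_succ]; ring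

lemma le_pow_mul_choose (he : ∀ n k, 0 ≤ e n k) (hβ : β ≤ 1) (ha : 0 ≤ a) {M : ℝ}
    (hM : ∀ n < N, e (n + 1) 0 ≤ M) :
    ∀ k, ∀ n < N, e (n + 1) k ≤ a ^ k * n.choose k * M := by
  intro k
  induction k with
  | zero => simpa using hM
  | succ k ihk =>
    intro n hn
    induction n with
    | zero => simpa [hrec.zero] using hrec.step 0 hn k
    | succ n ihn =>
      calc e (n + 2) (k + 1) ≤ β * e (n + 1) (k + 1) + a * e (n + 1) k := hrec.step _ hn k
        _ ≤ e (n + 1) (k + 1) + a * e (n + 1) k := by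
          gcongr
          exact mul_le_of_le_one_left (he _ _) hβ
        _ ≤ a ^ (k + 1) * n.choose (k + 1) * M + a * (a ^ k * n.choose k * M) := by
          gcongr
          exacts [ihn (by omega), ihk n (by omega)]
        _ = a ^ (k + 1) * (n + 1).choose (k + 1) * M := by
          rw [Nat.choose_succ_succ', Nat.cast_add]; ring

variable (he : ∀ n k, 0 ≤ e n k) (ha : 0 ≤ a) (hN : (Icc 1 N).Nonempty)
include he ha

lemma sup'_succ_le_geom (hβ : 0 ≤ β) (k : ℕ) :
    (Icc 1 N).sup' hN (e · (k + 1)) ≤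
      (a * ∑ t ∈ range (N - 1), β ^ t) ^ (k + 1) * (Icc 1 N).sup' hN (e · 0) := by
  refine le_geom (u := fun k => (Icc 1 N).sup' hN (e · k)) (by positivity) (k + 1) fun k _ => ?_
  refine sup'_Icc_one_le hN fun n hn => ?_
  refine (hrec.le_mul_geom_sum hβ ha (fun n hn => le_sup'_Icc_one hN (e · k) hn) n hn).trans ?_
  gcongr
  · exact sup'_Icc_one_nonneg hN (he · k)
  · omega

lemma sup'_succ_le_choose (hβ : β ≤ 1) (k : ℕ) :
    (Icc 1 N).sup' hN (e · (k + 1)) ≤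
      a ^ (k + 1) * (N - 1).choose (k + 1) * (Icc 1 N).sup' hN (e · 0) := by
  refine sup'_Icc_one_le hN fun n hn => ?_
  refine (hrec.le_pow_mul_choose he hβ ha
    (fun n hn => le_sup'_Icc_one hN (e · 0) hn) (k + 1) n hn).trans ?_
  gcongr
  · exact sup'_Icc_one_nonneg hN (he · 0)
  · omega

end PararealErrorRecursion

theorem stmt16_general (h ΔT ε : ℝ) (hh : 0 < h) (hΔT : 0 < ΔT) (hε : 0 < ε)
    (m : ℕ)
    (F : EuclideanSpace ℝ (Fin m) → EuclideanSpace ℝ (Fin m))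
    (C₁ : ℝ) (hC₁ : 0 ≤ C₁)
    (hLTE : ∀ U V, ‖(F U - act (Pmat m h ΔT ε 1) U) - (F V - act (Pmat m h ΔT ε 1) V)‖
      ≤ C₁ * ΔT ^ 2 * ‖U - V‖)
    (N : ℕ) (hN : 1 ≤ N)
    (u0 : EuclideanSpace ℝ (Fin m))
    (Uf : ℕ → EuclideanSpace ℝ (Fin m)) (U : ℕ → ℕ → EuclideanSpace ℝ (Fin m))
    (hUf0 : Uf 0 = u0)
    (hUfrec : ∀ n < N, Uf (n + 1) = F (Uf n))
    (h0 : ∀ k, U 0 k = u0)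
    (hrec : ∀ n < N, ∀ k, U (n + 1) (k + 1) =
      act (Pmat m h ΔT ε 1) (U n (k + 1)) + F (U n k)
        - act (Pmat m h ΔT ε 1) (U n k)) :
    ∀ k : ℕ,
      ((Finset.Icc 1 N).sup' (Finset.nonempty_Icc.mpr hN)
          fun j => ‖Uf j - U j (k + 1)‖) ≤
        (C₁ * ΔT ^ 2) ^ (k + 1) *
          min (((1 - opNorm (Pmat m h ΔT ε 1) ^ (N - 1)) /
                  (1 - opNorm (Pmat m h ΔT ε 1))) ^ (k + 1))
              ((N - 1).choose (k + 1) : ℝ) *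
          ((Finset.Icc 1 N).sup' (Finset.nonempty_Icc.mpr hN)
            fun j => ‖Uf j - U j 0‖) := by
  intro k
  set P := Pmat m h ΔT ε 1
  have hβ : opNorm P < 1 := opNorm_Pmat_one_lt_one hh.ne' hΔT hε.ne'
  have herr : PararealErrorRecursion (fun n k => ‖Uf n - U n k‖) (opNorm P) (C₁ * ΔT ^ 2) N := by
    refine ⟨fun k => by rw [hUf0, h0, sub_self, norm_zero], fun n hn k => ?_⟩
    rw [hUfrec n hn, hrec n hn k]
    exact norm_sub_parareal_update_le _ hLTE _ _ _
  have he (n k : ℕ) : 0 ≤ ‖Uf n - U n k‖ := norm_nonneg _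
  have ha : 0 ≤ C₁ * ΔT ^ 2 := by positivity
  have hgeom : (1 - opNorm P ^ (N - 1)) / (1 - opNorm P) = ∑ t ∈ range (N - 1), opNorm P ^ t := by
    rw [geom_sum_eq hβ.ne, ← neg_div_neg_eq, neg_sub, neg_sub]
  rw [hgeom, mul_min_of_nonneg _ _ (by positivity),
    min_mul_of_nonneg _ _ (sup'_Icc_one_nonneg _ (he · 0)), ← mul_pow]
  exact le_min (herr.sup'_succ_le_geom he ha _ (norm_nonneg _) k)
    (herr.sup'_succ_le_choose he ha _ hβ.le k)

theorem stmt16 (h ΔT ε : ℝ) (hh : 0 < h) (hΔT : 0 < ΔT) (hε : 0 < ε)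
    (m : ℕ) (hm : 1 ≤ m)
    (F : EuclideanSpace ℝ (Fin m) → EuclideanSpace ℝ (Fin m))
    (C₁ : ℝ) (hC₁ : 0 ≤ C₁)
    (hLTE : ∀ U V, ‖(F U - act (Pmat m h ΔT ε 1) U) - (F V - act (Pmat m h ΔT ε 1) V)‖
      ≤ C₁ * ΔT ^ 2 * ‖U - V‖)
    (N : ℕ) (hN : 1 ≤ N)
    (u0 : EuclideanSpace ℝ (Fin m))
    (Uf : ℕ → EuclideanSpace ℝ (Fin m)) (U : ℕ → ℕ → EuclideanSpace ℝ (Fin m))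
    (hUf0 : Uf 0 = u0)
    (hUfrec : ∀ n < N, Uf (n + 1) = F (Uf n))
    (h0 : ∀ k, U 0 k = u0)
    (hrec : ∀ n < N, ∀ k, U (n + 1) (k + 1) =
      act (Pmat m h ΔT ε 1) (U n (k + 1)) + F (U n k)
        - act (Pmat m h ΔT ε 1) (U n k)) :
    ∀ k : ℕ,
      ((Finset.Icc 1 N).sup' (Finset.nonempty_Icc.mpr hN)
          fun j => ‖Uf j - U j (k + 1)‖) ≤
        (C₁ * ΔT ^ 2) ^ (k + 1) *
          min (((1 - opNorm (Pmat m h ΔT ε 1) ^ (N - 1)) /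
                  (1 - opNorm (Pmat m h ΔT ε 1))) ^ (k + 1))
              ((N - 1).choose (k + 1) : ℝ) *
          ((Finset.Icc 1 N).sup' (Finset.nonempty_Icc.mpr hN)
            fun j => ‖Uf j - U j 0‖) :=
  stmt16_general h ΔT ε hh hΔT hε m F C₁ hC₁ hLTE N hN u0 Uf U hUf0 hUfrec h0 hrec
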